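/- Let G be a finite group. Call a subspace L of the augmentation ideal of ℂ[G] admissible if it is invariant under conjugation by every h ∈ G and under D_a for every a : G → ℂ. Then the map C ↦ L_C := span_ℂ{ x_g : g ∈ C } is a bijection from the set of conjugacy classes of G not containing 1 onto the set of minimal nonzero admissible subspaces (i.e. nonzero admissible L such that every nonzero admissible subspace contained in L equals L). -/

import Mathlib

/-!
For `a` the indicator of `g`, `D_a y = y(g) • x_g`; so an admissible subspace contains `x_g` for
every `g` in the support of one of its elements. Its elements have augmentation zero, so a nonzero
admissible subspace contains some `x_g` with `g ≠ 1`, and then, by conjugation invariance, all of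
`L_C` for the class `C` of `g`. Conversely `L_C` is admissible because `D_a x_g = a(g) x_g` and
`h x_g h⁻¹ = x_{hgh⁻¹}`, and `L_C` determines `C` because for `k ≠ 1` the `k`-coefficient of `x_g`
is `δ_{gk}`.
-/

open MonoidAlgebra

noncomputable section

variable {G : Type*} [Group G] [Fintype G]

/-- The augmentation map `ε : ℂ[G] → ℂ`, the algebra map sending each group element to `1`. -/
def aug (G : Type*) [Group G] : MonoidAlgebra ℂ G →ₐ[ℂ] ℂ :=
  MonoidAlgebra.lift ℂ ℂ G 1

/-- `x_g := g - 1` in the group algebra. -/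
def xElt (g : G) : MonoidAlgebra ℂ G :=
  MonoidAlgebra.of ℂ G g - 1

/-- The linear endomorphism `D_a` of `ℂ[G]` with `D_a(g) = a(g)·g - a(g)·1` on basis elements. -/
def Dop (a : G → ℂ) : MonoidAlgebra ℂ G →ₗ[ℂ] MonoidAlgebra ℂ G :=
  (Finsupp.lsum ℂ fun g => LinearMap.toSpanSingleton ℂ _ (a g • xElt g)) ∘ₗ
    (MonoidAlgebra.coeffLinearEquiv ℂ).toLinearMap

/-- A subspace of the augmentation ideal invariant under conjugation and all `D_a`. -/
def Admissible (L : Submodule ℂ (MonoidAlgebra ℂ G)) : Prop :=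
  (∀ y ∈ L, aug G y = 0) ∧
  (∀ h : G, ∀ y ∈ L, MonoidAlgebra.of ℂ G h * y * MonoidAlgebra.of ℂ G h⁻¹ ∈ L) ∧
  (∀ a : G → ℂ, ∀ y ∈ L, Dop a y ∈ L)


section

variable {G : Type*} [Group G]

lemma aug_single (g : G) (c : ℂ) : aug G (single g c) = c := by
  simp [aug]

lemma exists_coeff_ne_zero_of_aug_eq_zero {y : MonoidAlgebra ℂ G}
    (hy : aug G y = 0) (hy0 : y ≠ 0) : ∃ g ≠ 1, y.coeff g ≠ 0 := by
  by_contra! h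
  have hy1 : y = single 1 (y.coeff 1) := by
    rw [← coeff_inj, coeff_single, ← Finsupp.support_subset_singleton]
    intro g hg
    exact Finset.mem_singleton.mpr (not_imp_comm.mp (h g) (Finsupp.mem_support_iff.mp hg))
  rw [hy1, aug_single] at hy
  exact hy0 (by rw [hy1, hy, single_zero])

lemma xElt_eq (g : G) : xElt g = single g 1 - 1 := rfl

lemma xElt_one : xElt (1 : G) = 0 := sub_self _

lemma aug_xElt (g : G) : aug G (xElt g) = 0 := by
  rw [xElt_eq, map_sub, aug_single, map_one, sub_self]

lemma coeff_xElt [DecidableEq G] {g k : G} (hk : k ≠ 1) :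
    (xElt g).coeff k = if g = k then 1 else 0 := by
  simp [xElt_eq, one_def, Finsupp.single_apply, hk.symm]

lemma xElt_ne_zero {g : G} (hg : g ≠ 1) : xElt g ≠ 0 := fun h => by
  classical
  simpa [h] using coeff_xElt (g := g) hg

lemma conj_xElt (h g : G) : of ℂ G h * xElt g * of ℂ G h⁻¹ = xElt (h * g * h⁻¹) := by
  simp only [xElt, mul_sub, sub_mul, mul_one, ← map_mul, mul_inv_cancel, map_one]

lemma Dop_single (a : G → ℂ) (g : G) (c : ℂ) : Dop a (single g c) = (c * a g) • xElt g := by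
  simp [Dop, mul_smul]

lemma Dop_xElt (a : G → ℂ) (g : G) : Dop a (xElt g) = a g • xElt g := by
  conv_lhs => rw [xElt_eq, one_def]
  rw [map_sub, Dop_single, Dop_single, xElt_one, smul_zero, sub_zero, one_mul]

lemma Dop_pi_single [DecidableEq G] (g : G) (y : MonoidAlgebra ℂ G) :
    Dop (Pi.single g 1) y = y.coeff g • xElt g := by
  induction y using MonoidAlgebra.induction_linear with
  | zero => simp
  | add y z hy hz => rw [map_add, hy, hz, coeff_add, Finsupp.add_apply, add_smul]
  | single k c =>
    rw [Dop_single]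
    rcases eq_or_ne k g with rfl | hk
    · simp
    · simp [hk.symm]

lemma xElt_mem_span_iff {C : Set G} {g : G} (hg : g ≠ 1) :
    xElt g ∈ Submodule.span ℂ (xElt '' C) ↔ g ∈ C := by
  classical
  refine ⟨fun h => by_contra fun hgC => ?_, fun h => Submodule.subset_span ⟨g, h, rfl⟩⟩
  let coeffAt : MonoidAlgebra ℂ G →ₗ[ℂ] ℂ :=
    Finsupp.lapply g ∘ₗ (coeffLinearEquiv ℂ).toLinearMap
  have hker : Submodule.span ℂ (xElt '' C) ≤ LinearMap.ker coeffAt := by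
    rw [Submodule.span_le]
    rintro _ ⟨k, hk, rfl⟩
    simp [coeffAt, coeff_xElt hg, show k ≠ g from fun e => hgC (e ▸ hk)]
  simpa [coeffAt, coeff_xElt hg] using hker h

lemma admissible_span_xElt {C : Set G} (hC : ∀ g ∈ C, ∀ h : G, h * g * h⁻¹ ∈ C) :
    Admissible (Submodule.span ℂ (xElt '' C)) := by
  have invariant (f : MonoidAlgebra ℂ G →ₗ[ℂ] MonoidAlgebra ℂ G)
      (hf : ∀ k ∈ C, f (xElt k) ∈ Submodule.span ℂ (xElt '' C)) {y : MonoidAlgebra ℂ G}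
      (hy : y ∈ Submodule.span ℂ (xElt '' C)) : f y ∈ Submodule.span ℂ (xElt '' C) :=
    Submodule.span_le (p := (Submodule.span ℂ (xElt '' C)).comap f) |>.mpr
      (by rintro _ ⟨k, hk, rfl⟩; exact hf k hk) hy
  refine ⟨fun y hy => ?_,
    fun h y => invariant (LinearMap.mulLeftRight ℂ (of ℂ G h, of ℂ G h⁻¹)) ?_,
    fun a y => invariant (Dop a) ?_⟩
  · exact Submodule.span_le (p := LinearMap.ker (aug G).toLinearMap) |>.mpr
      (by rintro _ ⟨k, -, rfl⟩; exact aug_xElt k) hy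
  · intro k hk
    rw [LinearMap.mulLeftRight_apply, conj_xElt]
    exact Submodule.subset_span ⟨_, hC k hk h, rfl⟩
  · intro k hk
    rw [Dop_xElt]
    exact Submodule.smul_mem _ _ (Submodule.subset_span ⟨k, hk, rfl⟩)

namespace Admissible

variable {L : Submodule ℂ (MonoidAlgebra ℂ G)}

lemma xElt_mem_of_coeff_ne_zero (hL : Admissible L) {y : MonoidAlgebra ℂ G} (hy : y ∈ L) {g : G}
    (hg : y.coeff g ≠ 0) : xElt g ∈ L := by
  classical
  have := hL.2.2 (Pi.single g 1) y hy
  rwa [Dop_pi_single, Submodule.smul_mem_iff L hg] at this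

lemma span_conjugatesOf_le (hL : Admissible L) {g : G} (hg : xElt g ∈ L) :
    Submodule.span ℂ (xElt '' conjugatesOf g) ≤ L := by
  rw [Submodule.span_le]
  rintro _ ⟨k, hk, rfl⟩
  obtain ⟨c, rfl⟩ := isConj_iff.mp hk
  rw [← conj_xElt]
  exact hL.2.1 c _ hg

lemma exists_span_conjugatesOf_le (hL : Admissible L) (hne : L ≠ ⊥) :
    ∃ g ≠ 1, Submodule.span ℂ (xElt '' conjugatesOf g) ≤ L := by
  obtain ⟨y, hyL, hy0⟩ := Submodule.exists_mem_ne_zero_of_ne_bot hne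
  obtain ⟨g, hg1, hg⟩ := exists_coeff_ne_zero_of_aug_eq_zero (hL.1 y hyL) hy0
  exact ⟨g, hg1, hL.span_conjugatesOf_le (hL.xElt_mem_of_coeff_ne_zero hyL hg)⟩

end Admissible

lemma admissible_span_conjugatesOf (g : G) :
    Admissible (Submodule.span ℂ (xElt '' conjugatesOf g)) :=
  admissible_span_xElt fun _ hk h => hk.trans (isConj_iff.mpr ⟨h, rfl⟩)

lemma span_conjugatesOf_ne_bot {g : G} (hg : g ≠ 1) :
    Submodule.span ℂ (xElt '' conjugatesOf g) ≠ ⊥ :=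
  (Submodule.ne_bot_iff _).mpr ⟨xElt g, Submodule.subset_span ⟨g, mem_conjugatesOf_self, rfl⟩,
    xElt_ne_zero hg⟩

lemma span_xElt_injOn {C₁ C₂ : Set G} (h₁ : (1 : G) ∉ C₁) (h₂ : (1 : G) ∉ C₂)
    (h : Submodule.span ℂ (xElt '' C₁) = Submodule.span ℂ (xElt '' C₂)) : C₁ = C₂ := by
  ext g
  by_cases hg : g = 1
  · subst hg; simp [h₁, h₂]
  · rw [← xElt_mem_span_iff hg, h, xElt_mem_span_iff hg]

end

theorem stmt2 :
    Set.BijOn (fun C : Set G => Submodule.span ℂ (xElt '' C))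
      {C : Set G | (∃ g : G, C = {h | IsConj g h}) ∧ (1 : G) ∉ C}
      {L : Submodule ℂ (MonoidAlgebra ℂ G) | Admissible L ∧ L ≠ ⊥ ∧
        ∀ L' : Submodule ℂ (MonoidAlgebra ℂ G), Admissible L' → L' ≠ ⊥ → L' ≤ L → L' = L} := by
  refine ⟨?mapsTo, fun C₁ hC₁ C₂ hC₂ h => span_xElt_injOn hC₁.2 hC₂.2 h, ?surjOn⟩
  case mapsTo =>
    rintro _ ⟨⟨g₀, rfl⟩, h₁⟩
    have hg₀ : g₀ ≠ 1 := fun e => h₁ (e ▸ mem_conjugatesOf_self)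
    refine ⟨admissible_span_conjugatesOf g₀, span_conjugatesOf_ne_bot hg₀, fun L' hL' hne hle => ?_⟩
    obtain ⟨g, hg1, hgL'⟩ := hL'.exists_span_conjugatesOf_le hne
    have hconj : IsConj g₀ g := (xElt_mem_span_iff hg1).mp
      (hle (hgL' (Submodule.subset_span ⟨g, mem_conjugatesOf_self, rfl⟩)))
    refine le_antisymm hle ?_
    rwa [← isConj_iff_conjugatesOf_eq.mp hconj] at hgL'
  case surjOn =>
    rintro L ⟨hL, hne, hmin⟩
    obtain ⟨g, hg1, hgL⟩ := hL.exists_span_conjugatesOf_le hne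
    exact ⟨conjugatesOf g, ⟨⟨g, rfl⟩, fun h => hg1 (isConj_one_left.mp h)⟩,
      hmin _ (admissible_span_conjugatesOf g) (span_conjugatesOf_ne_bot hg1) hgL⟩

end
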